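/- arXiv:2401.17411 — 2 statements merged into one kernel-verified Lean document; each statement's English description precedes it below -/
import Mathlib

section
/- For points p_i ≠ p_j in ℝ² with positive weights w_i > w_j, the set {x ∈ ℝ² : ‖x − p_i‖/w_i ≤ ‖x − p_j‖/w_j} equals the complement of the open ball centered at o = (w_j²/(w_j² − w_i²))·p_i − (w_i²/(w_j² − w_i²))·p_j with radius ε = (w_i·w_j/(w_i² − w_j²))·‖p_i − p_j‖. -/
theorem stmt1 (pi pj : EuclideanSpace ℝ (Fin 2)) (wi wj : ℝ)
    (hne : pi ≠ pj) (hwj : 0 < wj) (hij : wj < wi) :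
    {x : EuclideanSpace ℝ (Fin 2) | ‖x - pi‖ / wi ≤ ‖x - pj‖ / wj} =
      (Metric.ball
        ((wj ^ 2 / (wj ^ 2 - wi ^ 2)) • pi - (wi ^ 2 / (wj ^ 2 - wi ^ 2)) • pj)
        (wi * wj / (wi ^ 2 - wj ^ 2) * ‖pi - pj‖))ᶜ := by
  have hwi : 0 < wi := hwj.trans hij
  have hc : 0 < wi ^ 2 - wj ^ 2 := by nlinarith
  have hc' : wi ^ 2 - wj ^ 2 ≠ 0 := ne_of_gt hc
  have hc'' : wj ^ 2 - wi ^ 2 ≠ 0 := by intro h; apply hc'; linarith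
  ext x
  simp only [Set.mem_setOf_eq, Set.mem_compl_iff, Metric.mem_ball, not_lt, dist_eq_norm]
  set o := (wj ^ 2 / (wj ^ 2 - wi ^ 2)) • pi - (wi ^ 2 / (wj ^ 2 - wi ^ 2)) • pj with ho
  have hxo : x - o = (wi ^ 2 / (wi ^ 2 - wj ^ 2)) • (x - pj)
      - (wj ^ 2 / (wi ^ 2 - wj ^ 2)) • (x - pi) := by
    rw [ho]
    match_scalars <;> field_simp <;> ring
  have hpij : pi - pj = (x - pj) - (x - pi) := by abel
  have key : ‖x - o‖ ^ 2 - (wi * wj / (wi ^ 2 - wj ^ 2) * ‖pi - pj‖) ^ 2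
      = (wi ^ 2 * ‖x - pj‖ ^ 2 - wj ^ 2 * ‖x - pi‖ ^ 2) / (wi ^ 2 - wj ^ 2) := by
    have e1 : ‖x - o‖ ^ 2 = inner ℝ (x - o) (x - o) :=
      (real_inner_self_eq_norm_sq _).symm
    have e2 : ‖x - pi‖ ^ 2 = inner ℝ (x - pi) (x - pi) :=
      (real_inner_self_eq_norm_sq _).symm
    have e3 : ‖x - pj‖ ^ 2 = inner ℝ (x - pj) (x - pj) :=
      (real_inner_self_eq_norm_sq _).symm
    have e4 : ‖pi - pj‖ ^ 2 = inner ℝ ((x - pj) - (x - pi)) ((x - pj) - (x - pi)) := by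
      rw [← hpij]; exact (real_inner_self_eq_norm_sq _).symm
    have hs : (wi * wj / (wi ^ 2 - wj ^ 2) * ‖pi - pj‖) ^ 2
        = (wi * wj / (wi ^ 2 - wj ^ 2)) ^ 2 * ‖pi - pj‖ ^ 2 := by ring
    rw [e1, hxo, hs, e4, e2, e3]
    simp only [inner_sub_left, inner_sub_right, real_inner_smul_left, real_inner_smul_right]
    rw [real_inner_comm pj x, real_inner_comm pi x, real_inner_comm pj pi]
    field_simp
    ring
  have hnorm_pos : 0 < ‖pi - pj‖ := norm_pos_iff.mpr (sub_ne_zero.mpr hne)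
  have heps : 0 ≤ wi * wj / (wi ^ 2 - wj ^ 2) * ‖pi - pj‖ := by positivity
  constructor
  · intro h
    have h1 : wj * ‖x - pi‖ ≤ wi * ‖x - pj‖ := by
      rw [div_le_div_iff₀ hwi hwj] at h; linarith
    have h2 : wj ^ 2 * ‖x - pi‖ ^ 2 ≤ wi ^ 2 * ‖x - pj‖ ^ 2 := by
      nlinarith [mul_self_le_mul_self (mul_nonneg hwj.le (norm_nonneg (x - pi))) h1]
    have h3 : (wi * wj / (wi ^ 2 - wj ^ 2) * ‖pi - pj‖) ^ 2 ≤ ‖x - o‖ ^ 2 := by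
      have : 0 ≤ (wi ^ 2 * ‖x - pj‖ ^ 2 - wj ^ 2 * ‖x - pi‖ ^ 2) / (wi ^ 2 - wj ^ 2) := by
        apply div_nonneg _ (le_of_lt hc); linarith
      linarith [key]
    exact (pow_le_pow_iff_left₀ heps (norm_nonneg (x - o)) two_ne_zero).mp h3
  · intro h
    have h3 : (wi * wj / (wi ^ 2 - wj ^ 2) * ‖pi - pj‖) ^ 2 ≤ ‖x - o‖ ^ 2 :=
      pow_le_pow_left₀ heps h 2
    have h2 : wj ^ 2 * ‖x - pi‖ ^ 2 ≤ wi ^ 2 * ‖x - pj‖ ^ 2 := by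
      have : 0 ≤ (wi ^ 2 * ‖x - pj‖ ^ 2 - wj ^ 2 * ‖x - pi‖ ^ 2) / (wi ^ 2 - wj ^ 2) := by
        linarith [key]
      have := (div_nonneg_iff.mp this)
      rcases this with ⟨h', _⟩ | ⟨_, h''⟩
      · linarith
      · linarith
    have h1 : wj * ‖x - pi‖ ≤ wi * ‖x - pj‖ := by
      have h2' : (wj * ‖x - pi‖) ^ 2 ≤ (wi * ‖x - pj‖) ^ 2 := by nlinarith
      exact (pow_le_pow_iff_left₀ (mul_nonneg hwj.le (norm_nonneg _))
        (mul_nonneg hwi.le (norm_nonneg _)) two_ne_zero).mp h2'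
    rw [div_le_div_iff₀ hwi hwj]
    linarith
end

section
/- For two distinct points p_i ≠ p_j with positive weights w_i < w_j, the domain region Dom_w(p_i, p_j) is a bounded set, and Dom_w(p_j, p_i) is unbounded. -/
/-!
If `a < b`, then `b‖x - p‖ ≤ a‖x - q‖ ≤ a‖x - p‖ + a‖p - q‖` confines `x` to the ball of radius
`a‖p - q‖ / (b - a)` around `p`. Conversely, when `a ≤ b` the point with the smaller weight `a`
dominates the whole ray from `q` pointing away from `p`, along which `‖x - q‖ < ‖x - p‖`.
-/

open Metric

variable {E : Type*}

/-- `Dom_w(p, q)` with weights `w_p = a` and `w_q = b`. -/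
def weightedDom [SeminormedAddCommGroup E] (p q : E) (a b : ℝ) : Set E :=
  {x | ‖x - p‖ / a ≤ ‖x - q‖ / b}

theorem weightedDom_subset_closedBall [SeminormedAddCommGroup E] (p q : E) {a b : ℝ}
    (ha : 0 < a) (hab : a < b) :
    weightedDom p q a b ⊆ closedBall p (a * ‖p - q‖ / (b - a)) := by
  intro x hx
  have hb : 0 < b := ha.trans hab
  have hweighted : b * ‖x - p‖ ≤ a * ‖x - q‖ := by
    rw [weightedDom, Set.mem_ofPred_eq, div_le_div_iff₀ ha hb] at hx
    linarith
  have htriangle : ‖x - q‖ ≤ ‖x - p‖ + ‖p - q‖ := norm_sub_le_norm_sub_add_norm_sub x p q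
  rw [mem_closedBall, dist_eq_norm, le_div_iff₀ (sub_pos.mpr hab)]
  nlinarith

theorem isBounded_weightedDom [SeminormedAddCommGroup E] (p q : E) {a b : ℝ}
    (ha : 0 < a) (hab : a < b) : Bornology.IsBounded (weightedDom p q a b) :=
  isBounded_closedBall.subset (weightedDom_subset_closedBall p q ha hab)

theorem add_smul_sub_mem_weightedDom [SeminormedAddCommGroup E] [NormedSpace ℝ E] (p q : E)
    {a b t : ℝ} (ha : 0 < a) (hab : a ≤ b) (ht : 0 ≤ t) : q + t • (q - p) ∈ weightedDom q p b a := by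
  have hq : q + t • (q - p) - q = t • (q - p) := add_sub_cancel_left q _
  have hp : q + t • (q - p) - p = (1 + t) • (q - p) := by
    rw [add_smul, one_smul]; abel
  rw [weightedDom, Set.mem_ofPred_eq, hq, hp, norm_smul, norm_smul, Real.norm_of_nonneg ht,
    Real.norm_of_nonneg (by linarith)]
  exact div_le_div₀ (by positivity) (by nlinarith [norm_nonneg (q - p)]) ha hab

theorem not_isBounded_weightedDom [NormedAddCommGroup E] [NormedSpace ℝ E] {p q : E}
    (hpq : p ≠ q) {a b : ℝ} (ha : 0 < a) (hab : a ≤ b) :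
    ¬ Bornology.IsBounded (weightedDom q p b a) := by
  intro hbdd
  obtain ⟨r, hr⟩ := (isBounded_iff_subset_closedBall q).mp hbdd
  have hd : 0 < ‖q - p‖ := norm_pos_iff.mpr (sub_ne_zero.mpr hpq.symm)
  have hr0 : 0 ≤ r := by
    have hq := hr (by simpa using add_smul_sub_mem_weightedDom p q ha hab le_rfl)
    rwa [mem_closedBall, dist_self] at hq
  have hfar :=
    hr (add_smul_sub_mem_weightedDom p q ha hab (t := (r + 1) / ‖q - p‖) (by positivity))
  rw [mem_closedBall, dist_eq_norm, add_sub_cancel_left, norm_smul,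
    Real.norm_of_nonneg (by positivity), div_mul_cancel₀ _ hd.ne'] at hfar
  linarith

theorem stmt12 (pi pj : EuclideanSpace ℝ (Fin 2)) (wi wj : ℝ)
    (hne : pi ≠ pj) (hwi : 0 < wi) (hij : wi < wj) :
    Bornology.IsBounded
      {x : EuclideanSpace ℝ (Fin 2) | ‖x - pi‖ / wi ≤ ‖x - pj‖ / wj} ∧
    ¬ Bornology.IsBounded
      {x : EuclideanSpace ℝ (Fin 2) | ‖x - pj‖ / wj ≤ ‖x - pi‖ / wi} :=
  ⟨isBounded_weightedDom pi pj hwi hij, not_isBounded_weightedDom hne hwi hij.le⟩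
end
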